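/- Let G be a directed graph whose edges are labelled by priorities in {0,…,d}, let y be an odd priority, and let S be the set of vertices of G from which every infinite path satisfies the parity condition (minimal priority seen infinitely often is even). Define the relation R_y on S by: R_y(v', v) holds iff there is a finite nonempty path from v to v' in G all of whose priorities are ≥ y and at least one of whose priorities equals y. Then R_y is well-founded on S: there is no infinite sequence v₀, v₁, v₂, … in S with R_y(v_{i+1}, v_i) for all i. -/

import Mathlib

/-!
Suppose `v₀, v₁, …` were an infinite descending chain for `R_y` inside the winning set.
Gluing the witnessing finite paths `vᵢ ⟶ vᵢ₊₁` end to end gives an infinite path from `v₀`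
whose priorities are all `≥ y` and which sees `y` in every segment, hence infinitely often.
Its minimal priority seen infinitely often is therefore the odd number `y`, contradicting
that every infinite path from `v₀` satisfies the parity condition.
-/

/-- The minimal value occurring infinitely often in the sequence `x` is even. -/
def MinInfEven (x : ℕ → ℕ) : Prop :=
  ∃ p, Even p ∧ (∀ N, ∃ n ≥ N, x n = p) ∧ ∀ q < p, ∃ N, ∀ n ≥ N, x n ≠ q

theorem not_minInfEven_of_le_of_frequently {x : ℕ → ℕ} {y : ℕ} (hy : Odd y)
    (hle : ∀ n, y ≤ x n) (hfreq : ∀ N, ∃ n ≥ N, x n = y) : ¬ MinInfEven x := by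
  rintro ⟨p, hp, hp_freq, hp_min⟩
  obtain ⟨n, -, hn⟩ := hp_freq 0
  rcases (hn ▸ hle n).eq_or_lt with rfl | hyp
  · exact Nat.not_even_iff_odd.mpr hy hp
  · obtain ⟨N, hN⟩ := hp_min y hyp
    obtain ⟨n, hnN, hn⟩ := hfreq N
    exact hN n hnN hn

/-- The position `(i, j)` (block `i`, offset `j`) of the `n`-th entry of the concatenation of
blocks of lengths `k 0, k 1, …`. -/
def concatPos (k : ℕ → ℕ) : ℕ → ℕ × ℕ
  | 0 => (0, 0)
  | n + 1 =>
    let p := concatPos k n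
    if p.2 + 1 < k p.1 then (p.1, p.2 + 1) else (p.1 + 1, 0)

section concatPos

variable {k : ℕ → ℕ}

theorem concatPos_snd_lt (hk : ∀ i, 0 < k i) (n : ℕ) : (concatPos k n).2 < k (concatPos k n).1 := by
  induction n with
  | zero => exact hk 0
  | succ n ih =>
    simp only [concatPos]
    split
    · assumption
    · exact hk _

theorem concatPos_add {n i : ℕ} (hn : concatPos k n = (i, 0)) {j : ℕ} (hj : j < k i) :
    concatPos k (n + j) = (i, j) := by
  induction j with
  | zero => exact hn
  | succ j ih =>
    rw [← Nat.add_assoc, concatPos, ih (Nat.lt_of_succ_lt hj)]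
    simp only [if_pos hj]

theorem exists_ge_concatPos_eq (hk : ∀ i, 0 < k i) (i : ℕ) : ∃ n ≥ i, concatPos k n = (i, 0) := by
  induction i with
  | zero => exact ⟨0, le_rfl, rfl⟩
  | succ i ih =>
    obtain ⟨n, hni, hn⟩ := ih
    have hlast := concatPos_add hn (Nat.sub_lt (hk i) Nat.one_pos)
    refine ⟨n + (k i - 1) + 1, by omega, ?_⟩
    rw [concatPos, hlast]
    simp only [if_neg (show ¬ k i - 1 + 1 < k i by omega)]

theorem frequently_concatPos (hk : ∀ i, 0 < k i) {P : ℕ → ℕ → Prop}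
    (hP : ∀ i, ∃ j < k i, P i j) (N : ℕ) : ∃ n ≥ N, P (concatPos k n).1 (concatPos k n).2 := by
  obtain ⟨n, hnN, hn⟩ := exists_ge_concatPos_eq hk N
  obtain ⟨j, hj, hPj⟩ := hP N
  exact ⟨n + j, by omega, by rwa [concatPos_add hn hj]⟩

theorem concatPos_succ_of_glued (hk : ∀ i, 0 < k i) {α : Type*} {f : ℕ → ℕ → α}
    (hglue : ∀ i, f i (k i) = f (i + 1) 0) (n : ℕ) :
    f (concatPos k (n + 1)).1 (concatPos k (n + 1)).2 =
      f (concatPos k n).1 ((concatPos k n).2 + 1) := by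
  simp only [concatPos]
  split
  · rfl
  · rw [← hglue, show (concatPos k n).2 + 1 = k (concatPos k n).1 by
      have := concatPos_snd_lt hk n; omega]

end concatPos

theorem odd_rank_relation_wellFounded {V : Type*}
    (edge : V → ℕ → V → Prop)
    (y : ℕ) (hy : Odd y) :
    ¬ ∃ seq : ℕ → V,
        (∀ i, ∀ (ρ : ℕ → V) (π : ℕ → ℕ), ρ 0 = seq i →
            (∀ n, edge (ρ n) (π n) (ρ (n + 1))) → MinInfEven π) ∧
        (∀ i, ∃ k ≥ 1, ∃ (ρ : ℕ → V) (π : ℕ → ℕ),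
            ρ 0 = seq i ∧ ρ k = seq (i + 1) ∧
            (∀ j < k, edge (ρ j) (π j) (ρ (j + 1))) ∧
            (∀ j < k, y ≤ π j) ∧ (∃ j < k, π j = y)) := by
  rintro ⟨seq, hwin, hstep⟩
  choose k hk ρ π hstart hend hedge hge hy_mem using hstep
  have hglue : ∀ i, ρ i (k i) = ρ (i + 1) 0 := fun i => (hend i).trans (hstart (i + 1)).symm
  let pos := concatPos k
  refine not_minInfEven_of_le_of_frequently hy
    (fun n => hge _ _ (concatPos_snd_lt hk n)) (frequently_concatPos hk hy_mem)
    (hwin 0 (fun n => ρ (pos n).1 (pos n).2) (fun n => π (pos n).1 (pos n).2) (hstart 0) ?_)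
  intro n
  rw [concatPos_succ_of_glued hk hglue n]
  exact hedge _ _ (concatPos_snd_lt hk n)
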